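/- arXiv:2405.01336 — 6 statements merged into one kernel-verified Lean document; each statement's English description precedes it below -/
import Mathlib

section
/- Let $p_{1,1}, p_{2,1}, p_{1,0}, p_{2,0} \in (0,1)$ with $p_{1,a} + p_{2,a} \le 1$ for $a \in \{0,1\}$ (interval-specific incidences under vaccine $a{=}1$ and placebo $a{=}0$). Define $\mathcal{L}_2 = 1 - (p_{1,1}+p_{2,1})/p_{2,0}$, $\mathcal{U}_2 = 1 - p_{2,1}/(p_{1,0}+p_{2,0})$, and the observed efficacy $VE_2^{obs} = 1 - \frac{p_{2,1}/(1-p_{1,1})}{p_{2,0}/(1-p_{1,0})}$. Then $\mathcal{L}_2 \le VE_2^{obs} \le \mathcal{U}_2$. -/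
/-- The sharp bounds of Theorem 1 always contain the conventional interval-2
vaccine efficacy: `𝓛₂ ≤ VE₂ᵒᵇˢ ≤ 𝓤₂`. -/
theorem obs_VE2_between_bounds
    (p11 p21 p10 p20 : ℝ)
    (h11 : p11 ∈ Set.Ioo (0:ℝ) 1) (h21 : p21 ∈ Set.Ioo (0:ℝ) 1)
    (h10 : p10 ∈ Set.Ioo (0:ℝ) 1) (h20 : p20 ∈ Set.Ioo (0:ℝ) 1)
    (hsum1 : p11 + p21 ≤ 1) (hsum0 : p10 + p20 ≤ 1) :
    1 - (p11 + p21) / p20 ≤ 1 - (p21 / (1 - p11)) / (p20 / (1 - p10)) ∧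
      1 - (p21 / (1 - p11)) / (p20 / (1 - p10)) ≤ 1 - p21 / (p10 + p20) := by
  obtain ⟨h11a, h11b⟩ := h11
  obtain ⟨h21a, h21b⟩ := h21
  obtain ⟨h10a, h10b⟩ := h10
  obtain ⟨h20a, h20b⟩ := h20
  have hm1 : (0:ℝ) < 1 - p11 := by linarith
  have hm0 : (0:ℝ) < 1 - p10 := by linarith
  have hA : (p21 / (1 - p11)) / (p20 / (1 - p10))
      = (p21 * (1 - p10)) / ((1 - p11) * p20) := by
    field_simp
  constructor
  · apply sub_le_sub_left
    rw [hA, div_le_div_iff₀ (by positivity) h20a]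
    nlinarith [mul_nonneg (mul_nonneg (by linarith : (0:ℝ) ≤ 1 - p11 - p21) h11a.le) h20a.le,
      mul_nonneg (mul_nonneg h21a.le h10a.le) h20a.le]
  · apply sub_le_sub_left
    rw [hA, div_le_div_iff₀ (by linarith) (by positivity)]
    nlinarith [mul_nonneg (mul_nonneg h10a.le (by linarith : (0:ℝ) ≤ 1 - p10 - p20)) h21a.le,
      mul_nonneg (mul_nonneg h11a.le h20a.le) h21a.le]
end

section
/- Consider random variables $Y_1^a, Y_2^{a,e_1=0}$ (binary) and a uniform random variable $U \sim \mathrm{Unif}[0,1]$. Fix constants $p_1, p_2, q_1, q_2 \in (0,1)$ with $p_1+p_2 \le 1$ and $q_1+q_2 \le 1$. Define $\Delta Y_1^{1} = \mathbb{1}(U \le p_1)$, $\Delta Y_2^{1,e_1=0} = \mathbb{1}(U \le p_1 + p_2)$, $\Delta Y_1^{0} = \mathbb{1}(U \le q_1)$, $\Delta Y_2^{0,e_1=0} = \mathbb{1}(q_1 < U \le q_1 + q_2)$, and $\Delta Y_2^{a,e_1=1} = \Delta Y_2^{a,e_1=0}\cdot \mathbb{1}(\Delta Y_1^a = 0)$.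 Then: (i) $E[\Delta Y_1^a] = p_1$ (resp. $q_1$), $E[\Delta Y_2^{a,e_1=1}] = p_2$ (resp. $q_2$); (ii) $E[\Delta Y_2^{1,e_1=0}] = p_1 + p_2$ and $E[\Delta Y_2^{0,e_1=0}] = q_2$; hence (iii) the ratio $E[\Delta Y_2^{1,e_1=0}]/E[\Delta Y_2^{0,e_1=0}] = (p_1+p_2)/q_2$, attaining the lower bound $\mathcal{L}_2 = 1 - (p_1+p_2)/q_2$. -/
open MeasureTheory

/-!
Every counterfactual is the indicator of an event `U ≤ b` or `a < U ≤ b` with `0 ≤ a ≤ b ≤ 1`: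
multiplying by `𝟙(ΔY₁ = 0) = 𝟙(a < U)` cuts `U ≤ b` down to `a < U ≤ b` and leaves `a < U ≤ b`
unchanged. Each mean is therefore `b` or `b - a`, read off the distribution function of `U`.
-/

lemma ite_le_mul_ite_ite_le_eq_zero (x a b : ℝ) :
    ((if x ≤ b then 1 else 0) * if (if x ≤ a then (1 : ℝ) else 0) = 0 then 1 else 0) =
      if a < x ∧ x ≤ b then (1 : ℝ) else 0 := by
  by_cases hxa : x ≤ a <;> by_cases hxb : x ≤ b <;> simp [hxa, hxb, not_lt.2, lt_of_not_ge]

lemma ite_Ioc_mul_ite_ite_le_eq_zero (x a b : ℝ) :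
    ((if a < x ∧ x ≤ b then 1 else 0) * if (if x ≤ a then (1 : ℝ) else 0) = 0 then 1 else 0) =
      if a < x ∧ x ≤ b then (1 : ℝ) else 0 := by
  by_cases hxa : x ≤ a <;> simp [hxa, not_lt.2, lt_of_not_ge]

section Uniform

variable {Ω : Type*} [MeasurableSpace Ω] {μ : Measure Ω} {U : Ω → ℝ}

lemma integral_ite_one_zero_eq_measureReal {p : Ω → Prop} [DecidablePred p]
    (hp : MeasurableSet {ω | p ω}) :
    ∫ ω, (if p ω then (1 : ℝ) else 0) ∂μ = μ.real {ω | p ω} := by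
  rw [← integral_indicator_one hp]
  congr 1 with ω
  simp [Set.indicator_apply]

variable (hU : Measurable U)
  (hUnif : ∀ t ∈ Set.Icc (0 : ℝ) 1, μ {ω | U ω ≤ t} = ENNReal.ofReal t)
include hU hUnif

lemma integral_ite_le_of_uniform {t : ℝ} (ht : t ∈ Set.Icc (0 : ℝ) 1) :
    ∫ ω, (if U ω ≤ t then (1 : ℝ) else 0) ∂μ = t := by
  rw [integral_ite_one_zero_eq_measureReal (measurableSet_le hU measurable_const), measureReal_def,
    hUnif t ht, ENNReal.toReal_ofReal ht.1]

lemma integral_ite_Ioc_of_uniform {a b : ℝ} (ha : 0 ≤ a) (hab : a ≤ b) (hb : b ≤ 1) :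
    ∫ ω, (if a < U ω ∧ U ω ≤ b then (1 : ℝ) else 0) ∂μ = b - a := by
  have hdiff : {ω | a < U ω ∧ U ω ≤ b} = {ω | U ω ≤ b} \ {ω | U ω ≤ a} := by
    ext ω
    simp [and_comm]
  have hle (t : ℝ) : MeasurableSet {ω | U ω ≤ t} := measurableSet_le hU measurable_const
  have hsub : {ω | U ω ≤ a} ⊆ {ω | U ω ≤ b} := fun _ h ↦ le_trans h hab
  have hμb : μ {ω | U ω ≤ b} = ENNReal.ofReal b := hUnif b ⟨ha.trans hab, hb⟩
  have hμa : μ {ω | U ω ≤ a} = ENNReal.ofReal a := hUnif a ⟨ha, hab.trans hb⟩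
  rw [integral_ite_one_zero_eq_measureReal (hdiff ▸ (hle b).diff (hle a)), hdiff,
    measureReal_sdiff hsub (hle a) (hμb ▸ ENNReal.ofReal_ne_top),
    measureReal_def, measureReal_def, hμb, hμa, ENNReal.toReal_ofReal (ha.trans hab),
    ENNReal.toReal_ofReal ha]

end Uniform

theorem dgm_attains_lower_bound_general
    {Ω : Type*} [MeasurableSpace Ω] (μ : Measure Ω)
    (U : Ω → ℝ) (hU : Measurable U)
    (hUnif : ∀ t ∈ Set.Icc (0:ℝ) 1, μ {ω | U ω ≤ t} = ENNReal.ofReal t)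
    (p1 p2 q1 q2 : ℝ)
    (hp1 : p1 ∈ Set.Ioo (0:ℝ) 1) (hp2 : p2 ∈ Set.Ioo (0:ℝ) 1)
    (hq1 : q1 ∈ Set.Ioo (0:ℝ) 1) (hq2 : q2 ∈ Set.Ioo (0:ℝ) 1)
    (hp : p1 + p2 ≤ 1) (hq : q1 + q2 ≤ 1)
    -- counterfactual indicators constructed from U
    (dY1v dY2v0 dY2v1 dY1p dY2p0 dY2p1 : Ω → ℝ)
    (hdY1v : ∀ ω, dY1v ω = if U ω ≤ p1 then 1 else 0)
    (hdY2v0 : ∀ ω, dY2v0 ω = if U ω ≤ p1 + p2 then 1 else 0)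
    (hdY1p : ∀ ω, dY1p ω = if U ω ≤ q1 then 1 else 0)
    (hdY2p0 : ∀ ω, dY2p0 ω = if q1 < U ω ∧ U ω ≤ q1 + q2 then 1 else 0)
    (hdY2v1 : ∀ ω, dY2v1 ω = dY2v0 ω * (if dY1v ω = 0 then 1 else 0))
    (hdY2p1 : ∀ ω, dY2p1 ω = dY2p0 ω * (if dY1p ω = 0 then 1 else 0)) :
    -- (i) observed incidences
    (∫ ω, dY1v ω ∂μ = p1 ∧ ∫ ω, dY1p ω ∂μ = q1 ∧
      ∫ ω, dY2v1 ω ∂μ = p2 ∧ ∫ ω, dY2p1 ω ∂μ = q2) ∧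
    -- (ii) isolation counterfactual means
    (∫ ω, dY2v0 ω ∂μ = p1 + p2 ∧ ∫ ω, dY2p0 ω ∂μ = q2) ∧
    -- (iii) the ratio attains the lower bound
    (∫ ω, dY2v0 ω ∂μ) / (∫ ω, dY2p0 ω ∂μ) = (p1 + p2) / q2 := by
  have hp1' : p1 ∈ Set.Icc (0 : ℝ) 1 := Set.Ioo_subset_Icc_self hp1
  have hq1' : q1 ∈ Set.Icc (0 : ℝ) 1 := Set.Ioo_subset_Icc_self hq1
  have hp12 : p1 ≤ p1 + p2 := le_add_of_nonneg_right hp2.1.le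
  have hq12 : q1 ≤ q1 + q2 := le_add_of_nonneg_right hq2.1.le
  have hY1v : ∫ ω, dY1v ω ∂μ = p1 := by
    simp only [hdY1v]; exact integral_ite_le_of_uniform hU hUnif hp1'
  have hY1p : ∫ ω, dY1p ω ∂μ = q1 := by
    simp only [hdY1p]; exact integral_ite_le_of_uniform hU hUnif hq1'
  have hY2v0 : ∫ ω, dY2v0 ω ∂μ = p1 + p2 := by
    simp only [hdY2v0]; exact integral_ite_le_of_uniform hU hUnif ⟨hp1'.1.trans hp12, hp⟩
  have hY2p0 : ∫ ω, dY2p0 ω ∂μ = q2 := by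
    simp only [hdY2p0, integral_ite_Ioc_of_uniform hU hUnif hq1'.1 hq12 hq, add_sub_cancel_left]
  have hY2v1 : ∫ ω, dY2v1 ω ∂μ = p2 := by
    simp only [hdY2v1, hdY2v0, hdY1v, ite_le_mul_ite_ite_le_eq_zero,
      integral_ite_Ioc_of_uniform hU hUnif hp1'.1 hp12 hp, add_sub_cancel_left]
  have hY2p1 : ∫ ω, dY2p1 ω ∂μ = q2 := by
    simpa only [hdY2p1, hdY2p0, hdY1p, ite_Ioc_mul_ite_ite_le_eq_zero] using hY2p0
  exact ⟨⟨hY1v, hY1p, hY2v1, hY2p1⟩, ⟨hY2v0, hY2p0⟩, by rw [hY2v0, hY2p0]⟩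

/-- Data generating mechanism S1 attains the lower bound `𝓛₂`: constructing
all counterfactuals from a single uniform variable `U`, the observed
incidences equal `(p₁,p₂)` and `(q₁,q₂)` in the two arms, the isolation
counterfactuals have means `p₁+p₂` and `q₂`, and their ratio equals
`(p₁+p₂)/q₂`, attaining `𝓛₂ = 1 - (p₁+p₂)/q₂`. -/
theorem dgm_attains_lower_bound
    {Ω : Type*} [MeasurableSpace Ω] (μ : Measure Ω) [IsProbabilityMeasure μ]
    (U : Ω → ℝ) (hU : Measurable U)
    (hUnif : ∀ t ∈ Set.Icc (0:ℝ) 1, μ {ω | U ω ≤ t} = ENNReal.ofReal t)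
    (p1 p2 q1 q2 : ℝ)
    (hp1 : p1 ∈ Set.Ioo (0:ℝ) 1) (hp2 : p2 ∈ Set.Ioo (0:ℝ) 1)
    (hq1 : q1 ∈ Set.Ioo (0:ℝ) 1) (hq2 : q2 ∈ Set.Ioo (0:ℝ) 1)
    (hp : p1 + p2 ≤ 1) (hq : q1 + q2 ≤ 1)
    -- counterfactual indicators constructed from U
    (dY1v dY2v0 dY2v1 dY1p dY2p0 dY2p1 : Ω → ℝ)
    (hdY1v : ∀ ω, dY1v ω = if U ω ≤ p1 then 1 else 0)
    (hdY2v0 : ∀ ω, dY2v0 ω = if U ω ≤ p1 + p2 then 1 else 0)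
    (hdY1p : ∀ ω, dY1p ω = if U ω ≤ q1 then 1 else 0)
    (hdY2p0 : ∀ ω, dY2p0 ω = if q1 < U ω ∧ U ω ≤ q1 + q2 then 1 else 0)
    (hdY2v1 : ∀ ω, dY2v1 ω = dY2v0 ω * (if dY1v ω = 0 then 1 else 0))
    (hdY2p1 : ∀ ω, dY2p1 ω = dY2p0 ω * (if dY1p ω = 0 then 1 else 0)) :
    -- (i) observed incidences
    (∫ ω, dY1v ω ∂μ = p1 ∧ ∫ ω, dY1p ω ∂μ = q1 ∧
      ∫ ω, dY2v1 ω ∂μ = p2 ∧ ∫ ω, dY2p1 ω ∂μ = q2) ∧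
    -- (ii) isolation counterfactual means
    (∫ ω, dY2v0 ω ∂μ = p1 + p2 ∧ ∫ ω, dY2p0 ω ∂μ = q2) ∧
    -- (iii) the ratio attains the lower bound
    (∫ ω, dY2v0 ω ∂μ) / (∫ ω, dY2p0 ω ∂μ) = (p1 + p2) / q2 :=
  dgm_attains_lower_bound_general μ U hU hUnif p1 p2 q1 q2 hp1 hp2 hq1 hq2 hp hq dY1v dY2v0 dY2v1
    dY1p dY2p0 dY2p1 hdY1v hdY2v0 hdY1p hdY2p0 hdY2v1 hdY2p1
end

section
/- Let $p_{1,a}, p_{2,a} > 0$ for $a \in \{0,1\}$ and suppose the challenge risks satisfy $r_1^a = p_{1,a}/\pi_1$ and $p_{2,a}/\pi_2 \le r_2^a \le (p_{1,a}+p_{2,a})/\pi_2$ for common positive exposure probabilities $\pi_1, \pi_2$ (same in both arms). If additionally the no-waning-of-placebo condition $r_1^0 = r_2^0$ holds, then the ratio $\psi = r_1^1 / r_2^1$ satisfies $\frac{p_{1,1}/p_{1,0}}{(p_{1,1}+p_{2,1})/p_{2,0}} \le \psi \le \frac{p_{1,1}/p_{1,0}}{p_{2,1}/(p_{1,0}+p_{2,0})}$,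 i.e. $\mathcal{L}_\psi = (1-VE_1^{obs})/(1-\mathcal{L}_2) \le \psi \le (1-VE_1^{obs})/(1-\mathcal{U}_2) = \mathcal{U}_\psi$. -/
/-- Bounds on the relative challenge effect ψ = r₁¹/r₂¹ under
point identification of the first-interval challenge risks, interval bounds
on the second-interval challenge risks, and no waning of placebo. -/
theorem psi_bounds
    (p11 p21 p10 p20 : ℝ) (r11 r21 r10 r20 : ℝ) (π1 π2 : ℝ)
    (hp11 : 0 < p11) (hp21 : 0 < p21) (hp10 : 0 < p10) (hp20 : 0 < p20)
    (hr11 : 0 < r11) (hr21 : 0 < r21) (hr10 : 0 < r10) (hr20 : 0 < r20)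
    (hπ1 : 0 < π1) (hπ2 : 0 < π2)
    (hid1 : r11 = p11 / π1) (hid0 : r10 = p10 / π1)
    (hlb1 : p21 / π2 ≤ r21) (hub1 : r21 ≤ (p11 + p21) / π2)
    (hlb0 : p20 / π2 ≤ r20) (hub0 : r20 ≤ (p10 + p20) / π2)
    (hnowane : r10 = r20) :
    (p11 / p10) / ((p11 + p21) / p20) ≤ r11 / r21 ∧
      r11 / r21 ≤ (p11 / p10) / (p21 / (p10 + p20)) := by
  have h20 : r20 = p10 / π1 := by rw [← hnowane, hid0]
  have key : r11 / r21 = (p11 * r20) / (p10 * r21) := by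
    rw [hid1, h20]; field_simp
  have hA : p20 * r21 ≤ r20 * (p11 + p21) := by
    have h1 : p20 * r21 ≤ p20 * ((p11 + p21) / π2) :=
      mul_le_mul_of_nonneg_left hub1 hp20.le
    have h2 : (p20 / π2) * (p11 + p21) ≤ r20 * (p11 + p21) :=
      mul_le_mul_of_nonneg_right hlb0 (by positivity)
    calc p20 * r21 ≤ p20 * ((p11 + p21) / π2) := h1
      _ = (p20 / π2) * (p11 + p21) := by ring
      _ ≤ r20 * (p11 + p21) := h2
  have hB : r20 * p21 ≤ (p10 + p20) * r21 := by
    have h1 : r20 * p21 ≤ ((p10 + p20) / π2) * p21 :=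
      mul_le_mul_of_nonneg_right hub0 hp21.le
    have h2 : (p10 + p20) * (p21 / π2) ≤ (p10 + p20) * r21 :=
      mul_le_mul_of_nonneg_left hlb1 (by positivity)
    calc r20 * p21 ≤ ((p10 + p20) / π2) * p21 := h1
      _ = (p10 + p20) * (p21 / π2) := by ring
      _ ≤ (p10 + p20) * r21 := h2
  have eL : (p11 / p10) / ((p11 + p21) / p20) = (p11 * p20) / (p10 * (p11 + p21)) := by
    field_simp
  have eU : (p11 / p10) / (p21 / (p10 + p20)) = (p11 * (p10 + p20)) / (p10 * p21) := by
    field_simp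
  constructor
  · rw [key, eL, div_le_div_iff₀ (by positivity) (by positivity)]
    nlinarith [mul_le_mul_of_nonneg_left hA hp11.le]
  · rw [key, eU, div_le_div_iff₀ (by positivity) (by positivity)]
    nlinarith [mul_le_mul_of_nonneg_left hB hp11.le]
end

section
/- Suppose binary random variables $E_1, E_2, Y_1, Y_2$ with conditioning event $B$ of positive probability satisfy: $Y_2 = 0$ on $\{E_2 = 0\}$ and $Y_1 = 0$ on $\{E_1 = 0\}$ (exposure necessity), $Y_2 \perp E_1 \mid (Y_1, E_2, B)$ and $E_2 \perp E_1 \mid (Y_1, B)$, $P(E_1 = 0 \mid B) > 0$, and $P(Y_1 = 0 \mid B) > 0$. Then $P(Y_2 = 1 \mid Y_1 = 0, B) = P(Y_2 = 1 \mid E_1 = 0, B)$. -/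
/-!
Condition on the survivors `S = B ∩ {Y₁ = 0}`. Since `{E₁ = 0} ⊆ {Y₁ = 0}`, the right-hand
side is the probability of `{Y₂ = 1}` under `μ[|S]` further conditioned on `{E₁ = 0}`, so it
suffices that `{Y₂ = 1}` and `{E₁ = 0}` are independent under `μ[|S]`. As
`{Y₂ = 1} ⊆ {E₂ = 1}`, the two homogeneity independences chain: `{Y₂ = 1} ⊥ {E₁ = 1}` given
`{E₂ = 1}`, together with `{E₂ = 1} ⊥ {E₁ = 1}`, gives `{Y₂ = 1} ⊥ {E₁ = 1}` under `μ[|S]`,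
and independence passes to the complement `{E₁ = 0}`.
-/

open MeasureTheory ProbabilityTheory

section Independence

variable {Ω : Type*} [MeasurableSpace Ω] {μ : Measure Ω} {a c d : Set Ω}

theorem cond_eq_of_measure_inter_eq_mul (hc : MeasurableSet c) (hc0 : μ c ≠ 0)
    (hcT : μ c ≠ ⊤) (h : μ (c ∩ d) = μ c * μ d) : μ[d | c] = μ d := by
  rw [cond_apply hc, h, ← mul_assoc, ENNReal.inv_mul_cancel hc0 hcT, one_mul]

theorem measure_inter_eq_mul_of_subset_of_cond [IsFiniteMeasure μ] (hc : MeasurableSet c)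
    (hac : a ⊆ c) (hcond : μ[a ∩ d | c] = μ[a | c] * μ[d | c])
    (hcd : μ (c ∩ d) = μ c * μ d) : μ (a ∩ d) = μ a * μ d := by
  by_cases hc0 : μ c = 0
  · have ha0 : μ a = 0 := measure_mono_null hac hc0
    rw [ha0, zero_mul, measure_mono_null Set.inter_subset_left ha0]
  have hca : c ∩ a = a := Set.inter_eq_right.mpr hac
  have hcad : c ∩ (a ∩ d) = a ∩ d := Set.inter_eq_right.mpr (Set.inter_subset_left.trans hac)
  calc μ (a ∩ d) = μ[a ∩ d | c] * μ c := by rw [cond_mul_eq_inter hc, hcad]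
    _ = μ[a | c] * μ c * μ[d | c] := by rw [hcond, mul_right_comm]
    _ = μ a * μ d := by
      rw [cond_mul_eq_inter hc, hca,
        cond_eq_of_measure_inter_eq_mul hc hc0 (measure_ne_top μ c) hcd]

theorem measure_inter_compl_eq_mul [IsProbabilityMeasure μ] (hd : MeasurableSet d)
    (h : μ (a ∩ d) = μ a * μ d) : μ (a ∩ dᶜ) = μ a * μ dᶜ := by
  rw [prob_compl_eq_one_sub hd, ENNReal.mul_sub (fun _ _ ↦ measure_ne_top μ a), mul_one, ← h,
    ← Set.sdiff_eq]
  exact ENNReal.eq_sub_of_add_eq (measure_ne_top μ _)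
    ((add_comm _ _).trans (measure_inter_add_sdiff a hd))

end Independence

theorem homogeneity_hazard_identification_general
    {Ω : Type*} [MeasurableSpace Ω] (μ : Measure Ω) [IsProbabilityMeasure μ]
    (E1 E2 Y1 Y2 : Ω → ℝ)
    (hE1 : Measurable E1) (hE2 : Measurable E2)
    (hY1 : Measurable Y1)
    (hE1b : ∀ ω, E1 ω = 0 ∨ E1 ω = 1) (hE2b : ∀ ω, E2 ω = 0 ∨ E2 ω = 1)
    (B : Set Ω) (hB : MeasurableSet B)
    -- exposure necessity
    (hnec2 : ∀ ω, E2 ω = 0 → Y2 ω = 0)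
    (hnec1 : ∀ ω, E1 ω = 0 → Y1 ω = 0)
    -- Y2 ⟂ E1 ∣ (Y1, E2, B)
    (hci1 : ∀ y1 e2 : ℝ,
      (μ[|B ∩ {ω | Y1 ω = y1} ∩ {ω | E2 ω = e2}]) ({ω | Y2 ω = 1} ∩ {ω | E1 ω = 1})
        = (μ[|B ∩ {ω | Y1 ω = y1} ∩ {ω | E2 ω = e2}]) {ω | Y2 ω = 1}
          * (μ[|B ∩ {ω | Y1 ω = y1} ∩ {ω | E2 ω = e2}]) {ω | E1 ω = 1})
    -- E2 ⟂ E1 ∣ (Y1, B)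
    (hci2 : ∀ y1 : ℝ,
      (μ[|B ∩ {ω | Y1 ω = y1}]) ({ω | E2 ω = 1} ∩ {ω | E1 ω = 1})
        = (μ[|B ∩ {ω | Y1 ω = y1}]) {ω | E2 ω = 1}
          * (μ[|B ∩ {ω | Y1 ω = y1}]) {ω | E1 ω = 1})
    -- positivity
    (hE1pos : 0 < (μ[|B]) {ω | E1 ω = 0}) :
    (μ[|B ∩ {ω | Y1 ω = 0}]) {ω | Y2 ω = 1}
      = (μ[|B ∩ {ω | E1 ω = 0}]) {ω | Y2 ω = 1} := by
  have hS : MeasurableSet (B ∩ {ω | Y1 ω = 0}) := hB.inter (hY1 (measurableSet_singleton 0))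
  have hE10 : MeasurableSet {ω | E1 ω = 0} := hE1 (measurableSet_singleton 0)
  have hE11 : MeasurableSet {ω | E1 ω = 1} := hE1 (measurableSet_singleton 1)
  have hE21 : MeasurableSet {ω | E2 ω = 1} := hE2 (measurableSet_singleton 1)
  have hunexposed : B ∩ {ω | E1 ω = 0} = B ∩ {ω | Y1 ω = 0} ∩ {ω | E1 ω = 0} := Set.ext fun ω ↦
    ⟨fun ⟨hb, he⟩ ↦ ⟨⟨hb, hnec1 ω he⟩, he⟩, fun ⟨⟨hb, _⟩, he⟩ ↦ ⟨hb, he⟩⟩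
  have hunexposed_pos : μ (B ∩ {ω | Y1 ω = 0} ∩ {ω | E1 ω = 0}) ≠ 0 :=
    hunexposed ▸ (inter_pos_of_cond_ne_zero hB hE1pos.ne').ne'
  have : IsProbabilityMeasure μ[|B ∩ {ω | Y1 ω = 0}] :=
    cond_isProbabilityMeasure fun h ↦ hunexposed_pos (measure_mono_null Set.inter_subset_left h)
  have hY2E2 : {ω | Y2 ω = 1} ⊆ {ω | E2 ω = 1} := fun ω hy ↦
    (hE2b ω).resolve_left fun he ↦ one_ne_zero (hy.symm.trans (hnec2 ω he))
  have hE1compl : {ω | E1 ω = 0} = {ω | E1 ω = 1}ᶜ := by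
    ext ω; rcases hE1b ω with h | h <;> simp [h]
  have hindep : μ[{ω | Y2 ω = 1} ∩ {ω | E1 ω = 0} | B ∩ {ω | Y1 ω = 0}]
      = μ[{ω | Y2 ω = 1} | B ∩ {ω | Y1 ω = 0}] * μ[{ω | E1 ω = 0} | B ∩ {ω | Y1 ω = 0}] := by
    rw [hE1compl]
    refine measure_inter_compl_eq_mul hE11 (measure_inter_eq_mul_of_subset_of_cond hE21 hY2E2 ?_
      (hci2 0))
    rw [cond_cond_eq_cond_inter hS hE21]
    exact hci1 0 1
  rw [hunexposed, ← cond_cond_eq_cond_inter hS hE10]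
  refine (cond_eq_of_measure_inter_eq_mul hE10 ?_ (measure_ne_top _ _) ?_).symm
  · exact (cond_pos_of_inter_ne_zero hS hunexposed_pos).ne'
  · rw [Set.inter_comm {ω | E1 ω = 0}, hindep, mul_comm]

/-- Core conditional-independence computation in Proposition 1: under exposure
necessity and the homogeneity conditional independences (stated elementwise
for binary variables via conditional-measure factorizations), the interval-2
hazard among interval-1 survivors equals the interval-2 risk among those
unexposed during interval 1. -/
theorem homogeneity_hazard_identification
    {Ω : Type*} [MeasurableSpace Ω] (μ : Measure Ω) [IsProbabilityMeasure μ]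
    (E1 E2 Y1 Y2 : Ω → ℝ)
    (hE1 : Measurable E1) (hE2 : Measurable E2)
    (hY1 : Measurable Y1) (hY2 : Measurable Y2)
    (hE1b : ∀ ω, E1 ω = 0 ∨ E1 ω = 1) (hE2b : ∀ ω, E2 ω = 0 ∨ E2 ω = 1)
    (hY1b : ∀ ω, Y1 ω = 0 ∨ Y1 ω = 1) (hY2b : ∀ ω, Y2 ω = 0 ∨ Y2 ω = 1)
    (B : Set Ω) (hB : MeasurableSet B) (hBpos : 0 < μ B)
    -- exposure necessity
    (hnec2 : ∀ ω, E2 ω = 0 → Y2 ω = 0)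
    (hnec1 : ∀ ω, E1 ω = 0 → Y1 ω = 0)
    -- Y2 ⟂ E1 ∣ (Y1, E2, B)
    (hci1 : ∀ y1 e2 : ℝ,
      (μ[|B ∩ {ω | Y1 ω = y1} ∩ {ω | E2 ω = e2}]) ({ω | Y2 ω = 1} ∩ {ω | E1 ω = 1})
        = (μ[|B ∩ {ω | Y1 ω = y1} ∩ {ω | E2 ω = e2}]) {ω | Y2 ω = 1}
          * (μ[|B ∩ {ω | Y1 ω = y1} ∩ {ω | E2 ω = e2}]) {ω | E1 ω = 1})
    -- E2 ⟂ E1 ∣ (Y1, B)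
    (hci2 : ∀ y1 : ℝ,
      (μ[|B ∩ {ω | Y1 ω = y1}]) ({ω | E2 ω = 1} ∩ {ω | E1 ω = 1})
        = (μ[|B ∩ {ω | Y1 ω = y1}]) {ω | E2 ω = 1}
          * (μ[|B ∩ {ω | Y1 ω = y1}]) {ω | E1 ω = 1})
    -- positivity
    (hE1pos : 0 < (μ[|B]) {ω | E1 ω = 0})
    (hY1pos : 0 < (μ[|B]) {ω | Y1 ω = 0}) :
    (μ[|B ∩ {ω | Y1 ω = 0}]) {ω | Y2 ω = 1}
      = (μ[|B ∩ {ω | E1 ω = 0}]) {ω | Y2 ω = 1} :=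
  homogeneity_hazard_identification_general μ E1 E2 Y1 Y2 hE1 hE2 hY1 hE1b hE2b B hB hnec2 hnec1
    hci1 hci2 hE1pos
end

section
/- Let $p_{1,a}, p_{2,a} > 0$ with $p_{1,a} + p_{2,a} \le 1$ for $a \in \{0,1\}$, and let $r_k^a > 0$ (challenge risks) and $\pi_1, \pi_2 > 0$ (exposure probabilities) satisfy $p_{1,a} = r_1^a \pi_1$ and $p_{2,a} \le r_2^a \pi_2 \le p_{1,a} + p_{2,a}$ for both $a$. Suppose the no-waning null hypothesis holds for both arms: $r_1^a = r_2^a$ for $a \in \{0,1\}$. Then $\mathcal{L}_\psi \le 1 \le \mathcal{U}_\psi$, where $\mathcal{L}_\psi = \frac{p_{1,1}\, p_{2,0}}{p_{1,0}\,(p_{1,1}+p_{2,1})}$ and $\mathcal{U}_\psi = \frac{p_{1,1}\,(p_{1,0}+p_{2,0})}{p_{1,0}\, p_{2,1}}$. -/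
/-- Testable implication of the strict no-waning null: if the interval-1 and
interval-2 challenge risks coincide in both arms, the identified bounds on ψ
contain 1: `𝓛_ψ ≤ 1 ≤ 𝓤_ψ`. -/
theorem no_waning_null_bounds_contain_one
    (p11 p21 p10 p20 : ℝ) (r11 r21 r10 r20 : ℝ) (π1 π2 : ℝ)
    (hp11 : 0 < p11) (hp21 : 0 < p21) (hp10 : 0 < p10) (hp20 : 0 < p20)
    (hsum1 : p11 + p21 ≤ 1) (hsum0 : p10 + p20 ≤ 1)
    (hr11 : 0 < r11) (hr21 : 0 < r21) (hr10 : 0 < r10) (hr20 : 0 < r20)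
    (hπ1 : 0 < π1) (hπ2 : 0 < π2)
    (hid1 : p11 = r11 * π1) (hid0 : p10 = r10 * π1)
    (hlb1 : p21 ≤ r21 * π2) (hub1 : r21 * π2 ≤ p11 + p21)
    (hlb0 : p20 ≤ r20 * π2) (hub0 : r20 * π2 ≤ p10 + p20)
    (hnull1 : r11 = r21) (hnull0 : r10 = r20) :
    p11 * p20 / (p10 * (p11 + p21)) ≤ 1 ∧
      1 ≤ p11 * (p10 + p20) / (p10 * p21) := by
  have e1 : p11 = r21 * π1 := by rw [hid1, hnull1]
  have e0 : p10 = r20 * π1 := by rw [hid0, hnull0]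
  have k1 : p11 * p20 ≤ p10 * (p11 + p21) := by
    calc p11 * p20 ≤ (r21*π1) * (r20*π2) := by
          rw [e1]; exact mul_le_mul_of_nonneg_left hlb0 (by positivity)
      _ = (r20*π1) * (r21*π2) := by ring
      _ ≤ p10 * (p11 + p21) := by
          rw [e0]; exact mul_le_mul_of_nonneg_left hub1 (by positivity)
  have k2 : p10 * p21 ≤ p11 * (p10 + p20) := by
    calc p10 * p21 ≤ (r20*π1) * (r21*π2) := by
          rw [e0]; exact mul_le_mul_of_nonneg_left hlb1 (by positivity)
      _ = (r21*π1) * (r20*π2) := by ring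
      _ ≤ p11 * (p10 + p20) := by
          rw [e1]; exact mul_le_mul_of_nonneg_left hub0 (by positivity)
  constructor
  · rw [div_le_one (by positivity)]; exact k1
  · rw [le_div_iff₀ (by positivity), one_mul]; exact k2
end

section
/- Let $q_1, q_2 \in (0,1)$ with $q_1 + q_2 \le 1$ and $p_1, p_2 \in (0,1)$ with $p_1 + p_2 \le 1$, all positive. Then $\mathcal{L}_\psi \le \psi^{obs} \le \mathcal{U}_\psi$ where $\psi^{obs} = \frac{p_1/q_1}{\frac{p_2/(1-p_1)}{q_2/(1-q_1)}}$, $\mathcal{L}_\psi = \frac{p_1 q_2}{q_1 (p_1 + p_2)}$, and $\mathcal{U}_\psi = \frac{p_1 (q_1 + q_2)}{q_1 p_2}$. -/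
/-- The naive observed waning ratio `ψᵒᵇˢ = (1-VE₁ᵒᵇˢ)/(1-VE₂ᵒᵇˢ)` always lies
within the partial-identification bounds `[𝓛_ψ, 𝓤_ψ]`. -/
theorem psi_obs_between_bounds
    (p1 p2 q1 q2 : ℝ)
    (hp1 : p1 ∈ Set.Ioo (0:ℝ) 1) (hp2 : p2 ∈ Set.Ioo (0:ℝ) 1)
    (hq1 : q1 ∈ Set.Ioo (0:ℝ) 1) (hq2 : q2 ∈ Set.Ioo (0:ℝ) 1)
    (hp : p1 + p2 ≤ 1) (hq : q1 + q2 ≤ 1) :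
    p1 * q2 / (q1 * (p1 + p2)) ≤ (p1 / q1) / ((p2 / (1 - p1)) / (q2 / (1 - q1))) ∧
      (p1 / q1) / ((p2 / (1 - p1)) / (q2 / (1 - q1))) ≤ p1 * (q1 + q2) / (q1 * p2) := by
  obtain ⟨hp10, hp11⟩ := hp1
  obtain ⟨hp20, hp21⟩ := hp2
  obtain ⟨hq10, hq11⟩ := hq1
  obtain ⟨hq20, hq21⟩ := hq2
  have h1p : (0:ℝ) < 1 - p1 := by linarith
  have h1q : (0:ℝ) < 1 - q1 := by linarith
  have key : (p1 / q1) / ((p2 / (1 - p1)) / (q2 / (1 - q1)))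
      = (p1 * q2 * (1 - p1)) / (q1 * p2 * (1 - q1)) := by
    field_simp
  rw [key]
  constructor
  · rw [div_le_div_iff₀ (by positivity) (by positivity)]
    nlinarith [mul_nonneg (mul_nonneg (mul_nonneg hp10.le hq20.le) hq10.le)
        (mul_nonneg hp10.le (by linarith : (0:ℝ) ≤ 1 - p1 - p2)),
      mul_pos (mul_pos (mul_pos hp10 hq20) hq10) (mul_pos hp20 hq10)]
  · rw [div_le_div_iff₀ (by positivity) (by positivity)]
    nlinarith [mul_nonneg (mul_nonneg (mul_nonneg hp10.le hq10.le) hp20.le)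
        (mul_nonneg hq10.le (by linarith : (0:ℝ) ≤ 1 - q1 - q2)),
      mul_pos (mul_pos (mul_pos hp10 hq10) hp20) (mul_pos hq20 hp10)]
end
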